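/- arXiv:2509.00321 — 3 statements merged into one kernel-verified Lean document; each statement's English description precedes it below -/
import Mathlib

section
/- Let X be a proper geodesic metric space that is one-ended, and let X̄ = X ∪ ∂X be a metrizable compactification of X (the inclusion X → X̄ is a topological embedding onto a dense open subset, ∂X = X̄ \ X). Assume ∂X is weakly visible: whenever (xₙ) and (yₙ) are sequences in X with d(xₙ, yₙ) uniformly bounded and (xₙ) converges in X̄ to ξ ∈ ∂X, then (yₙ) also converges to ξ. Then ∂X is connected. -/
/-!
If the boundary split into two disjoint closed pieces `A ∋ ξ` and `B ∋ η`, normality would give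
disjoint open `U ⊇ A` and `V ⊇ B`. The complement of `U ∪ V` avoids the boundary, so it is a
compact subset `K` of `X`. Points of `X` close to `ξ` and to `η` can be chosen outside the compact
set `K'` that one-endedness attaches to `K`, and a path between them avoiding `K` then has a
connected image in `U ∪ V` meeting both `U` and `V`, which is impossible.
-/

open Set

namespace Topology.IsEmbedding

variable {X X' : Type*} [TopologicalSpace X] [TopologicalSpace X'] {e : X → X'}

theorem nonempty_compl_range [CompactSpace X'] (he : IsEmbedding e)
    (hX : ¬ IsCompact (univ : Set X)) : (range e)ᶜ.Nonempty := by
  rw [nonempty_compl]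
  intro h
  rw [he.isCompact_iff, image_univ, h] at hX
  exact hX isCompact_univ

theorem isCompact_preimage_compl [CompactSpace X'] (he : IsEmbedding e) {W : Set X'} (hW : IsOpen W)
    (hbdry : (range e)ᶜ ⊆ W) : IsCompact (e ⁻¹' Wᶜ) := by
  rw [he.isCompact_iff, image_preimage_eq_of_subset (compl_subset_comm.mp hbdry)]
  exact hW.isClosed_compl.isCompact

theorem exists_notMem_apply_mem [T2Space X'] (he : IsEmbedding e) (hdense : Dense (range e))
    {ξ : X'} (hξ : ξ ∉ range e) {W : Set X'} (hW : IsOpen W) (hξW : ξ ∈ W)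
    {K : Set X} (hK : IsCompact K) : ∃ x, x ∉ K ∧ e x ∈ W := by
  have hξK : ξ ∉ e '' K := fun h => hξ (image_subset_range e K h)
  obtain ⟨_, ⟨hxW, hxK⟩, x, rfl⟩ := hdense.inter_open_nonempty _
    (hW.inter (hK.image he.continuous).isClosed.isOpen_compl) ⟨ξ, hξW, hξK⟩
  exact ⟨x, fun h => hxK (mem_image_of_mem e h), hxW⟩

theorem isPreconnected_compl_range [CompactSpace X'] [T2Space X'] (he : IsEmbedding e)
    (hdense : Dense (range e)) (hopen : IsOpen (range e))
    (hend : ∀ K : Set X, IsCompact K → ∃ K' : Set X, IsCompact K' ∧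
      ∀ x y : X, x ∉ K' → y ∉ K' → ∃ γ : Path x y, ∀ t, γ t ∉ K) :
    IsPreconnected (range e)ᶜ := by
  rw [isPreconnected_iff_subset_of_fully_disjoint_closed hopen.isClosed_compl]
  intro A B hA hB hcover hAB
  by_contra! hsplit
  obtain ⟨⟨η, hηbdry, hηA⟩, ⟨ξ, hξbdry, hξB⟩⟩ := hsplit.imp not_subset.mp not_subset.mp
  obtain ⟨U, V, hU, hV, hAU, hBV, hUV⟩ := normal_separation hA hB hAB
  have hbdry : (range e)ᶜ ⊆ U ∪ V := hcover.trans (union_subset_union hAU hBV)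
  obtain ⟨K', hK', hpath⟩ := hend _ (he.isCompact_preimage_compl (hU.union hV) hbdry)
  obtain ⟨x, hxK', hxU⟩ := he.exists_notMem_apply_mem hdense hξbdry hU
    (hAU ((hcover hξbdry).resolve_right hξB)) hK'
  obtain ⟨y, hyK', hyV⟩ := he.exists_notMem_apply_mem hdense hηbdry hV
    (hBV ((hcover hηbdry).resolve_left hηA)) hK'
  obtain ⟨γ, hγ⟩ := hpath x y hxK' hyK'
  have hγUV : range (e ∘ γ) ⊆ U ∪ V := by
    rintro _ ⟨t, rfl⟩
    by_contra h
    exact hγ t h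
  have hγU : range (e ∘ γ) ⊆ U :=
    (isPreconnected_range (he.continuous.comp γ.continuous)).subset_left_of_subset_union
      hU hV hUV hγUV ⟨e x, ⟨0, by simp⟩, hxU⟩
  exact hUV.notMem_of_mem_left (hγU ⟨1, by simp⟩) hyV

end Topology.IsEmbedding

theorem stmt_4_general {X X' : Type*} [MetricSpace X]
    [TopologicalSpace X'] [CompactSpace X'] [TopologicalSpace.MetrizableSpace X']
    (e : X → X') (hemb : Topology.IsEmbedding e)
    (hdense : Dense (Set.range e)) (hopen : IsOpen (Set.range e))
    -- X is one-ended: unbounded, and any two points far enough out can be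
    -- joined by a path avoiding any prescribed compact set
    (hunbounded : ¬ Bornology.IsBounded (Set.univ : Set X))
    (honeend : ∀ K : Set X, IsCompact K → ∃ K' : Set X, IsCompact K' ∧ K ⊆ K' ∧
      ∀ x y : X, x ∉ K' → y ∉ K' → ∃ γ : Path x y, ∀ t, γ t ∉ K) :
    IsConnected (Set.range e)ᶜ := by
  refine ⟨hemb.nonempty_compl_range fun h => hunbounded h.isBounded, ?_⟩
  refine hemb.isPreconnected_compl_range hdense hopen fun K hK => ?_
  obtain ⟨K', hK', -, hpath⟩ := honeend K hK
  exact ⟨K', hK', hpath⟩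

theorem stmt_4 {X X' : Type*} [MetricSpace X] [ProperSpace X] [Nonempty X]
    [TopologicalSpace X'] [CompactSpace X'] [TopologicalSpace.MetrizableSpace X']
    (e : X → X') (hemb : Topology.IsEmbedding e)
    (hdense : Dense (Set.range e)) (hopen : IsOpen (Set.range e))
    -- X is geodesic
    (hgeo : ∀ x y : X, ∃ γ : ℝ → X, γ 0 = x ∧ γ (dist x y) = y ∧
      ∀ s ∈ Set.Icc 0 (dist x y), ∀ t ∈ Set.Icc 0 (dist x y),
        dist (γ s) (γ t) = |s - t|)
    -- X is one-ended: unbounded, and any two points far enough out can be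
    -- joined by a path avoiding any prescribed compact set
    (hunbounded : ¬ Bornology.IsBounded (Set.univ : Set X))
    (honeend : ∀ K : Set X, IsCompact K → ∃ K' : Set X, IsCompact K' ∧ K ⊆ K' ∧
      ∀ x y : X, x ∉ K' → y ∉ K' → ∃ γ : Path x y, ∀ t, γ t ∉ K)
    -- the boundary is weakly visible
    (hvis : ∀ (x y : ℕ → X) (ξ : X'), ξ ∉ Set.range e →
      (∃ K : ℝ, ∀ n, dist (x n) (y n) ≤ K) →
      Filter.Tendsto (fun n => e (x n)) Filter.atTop (nhds ξ) →
      Filter.Tendsto (fun n => e (y n)) Filter.atTop (nhds ξ)) :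
    IsConnected (Set.range e)ᶜ :=
  stmt_4_general e hemb hdense hopen hunbounded honeend
end

section
/- Let X̄₁ and X̄₂ be compact metrizable spaces. Suppose Dᵢ ⊆ X̄ᵢ is a countable dense set of isolated points of X̄ᵢ for i = 1, 2, and set ∂ᵢ := X̄ᵢ \ Dᵢ (assumed closed). Let ∂f : ∂₁ → ∂₂ be a homeomorphism and let πᵢ : Dᵢ → ∂ᵢ be nearest-point projections (d(x, πᵢ(x)) = dist(x, ∂ᵢ)). Then there exists a bijection f : D₁ → D₂ such that the combined map F : X̄₁ → X̄₂, defined by F = f on D₁ and F = ∂f on ∂₁, is a homeomorphism. -/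
/-!
Call `(a, b) ∈ D₁ × D₂` admissible if some `w ∈ ∂₁` has both `d(a, w)` and `d(b, bf w)` at most
`d(a, ∂₁) + d(b, ∂₂)`. Every `a` is admissible with infinitely many `b` (take `w` nearest to `a`
and `b` close to `bf w`), and symmetrically, so a back-and-forth argument, run as the
Rasiowa–Sikorski lemma on finite partial matchings, gives a bijection `e : D₁ ≃ D₂` made of
admissible pairs. Only finitely many points of `Dᵢ` lie at distance `≥ ε` from `∂ᵢ`, so the pairs
`(a, e a)` approach the graph of `bf`; by uniform continuity of `bf` the glued map is continuous,
and a continuous bijection from a compact space to a Hausdorff one is a homeomorphism.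
-/

open Filter Metric Set Topology

section BackAndForth

variable {α β : Type*}

def FinPartialMatching (R : α → β → Prop) : Type _ :=
  {f : Finset (α × β) // (∀ p ∈ f, R p.1 p.2) ∧ ∀ p ∈ f, ∀ q ∈ f, (p.1 = q.1 ↔ p.2 = q.2)}

namespace FinPartialMatching

variable {R : α → β → Prop}

instance : Preorder (FinPartialMatching R) := Subtype.preorder _

instance : Inhabited (FinPartialMatching R) := ⟨⟨∅, by simp, by simp⟩⟩

theorem exists_extend [DecidableEq α] [DecidableEq β] (f : FinPartialMatching R) {a : α}
    {b : β} (ha : a ∉ f.1.image Prod.fst) (hb : b ∉ f.1.image Prod.snd) (hab : R a b) :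
    ∃ g : FinPartialMatching R, f ≤ g ∧ (a, b) ∈ g.1 := by
  refine ⟨⟨insert (a, b) f.1, ?_, ?_⟩, Finset.subset_insert _ _, Finset.mem_insert_self _ _⟩
  · simpa [hab] using f.2.1
  · simp only [Finset.mem_image, not_exists, not_and] at ha hb
    simp only [Finset.mem_insert, forall_eq_or_imp]
    refine ⟨⟨by simp, fun q hq => ?_⟩, fun p hp => ⟨?_, f.2.2 p hp⟩⟩
    · exact ⟨fun h => (ha q hq h.symm).elim, fun h => (hb q hq h.symm).elim⟩
    · exact ⟨fun h => (ha p hp h).elim, fun h => (hb p hp h).elim⟩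

def definedAtLeft (forth : ∀ a (s : Finset β), ∃ b ∉ s, R a b) (a : α) :
    Order.Cofinal (FinPartialMatching R) where
  carrier := {f | ∃ b, (a, b) ∈ f.1}
  isCofinal f := by
    classical
    by_cases ha : a ∈ f.1.image Prod.fst
    · obtain ⟨⟨a', b⟩, hp, rfl⟩ := Finset.mem_image.1 ha
      exact ⟨f, ⟨b, hp⟩, le_rfl⟩
    · obtain ⟨b, hb, hab⟩ := forth a (f.1.image Prod.snd)
      obtain ⟨g, hfg, hg⟩ := f.exists_extend ha hb hab
      exact ⟨g, ⟨b, hg⟩, hfg⟩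

def definedAtRight (back : ∀ b (s : Finset α), ∃ a ∉ s, R a b) (b : β) :
    Order.Cofinal (FinPartialMatching R) where
  carrier := {f | ∃ a, (a, b) ∈ f.1}
  isCofinal f := by
    classical
    by_cases hb : b ∈ f.1.image Prod.snd
    · obtain ⟨⟨a, b'⟩, hp, rfl⟩ := Finset.mem_image.1 hb
      exact ⟨f, ⟨a, hp⟩, le_rfl⟩
    · obtain ⟨a, ha, hab⟩ := back b (f.1.image Prod.fst)
      obtain ⟨g, hfg, hg⟩ := f.exists_extend ha hb hab
      exact ⟨g, ⟨a, hg⟩, hfg⟩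

end FinPartialMatching

open FinPartialMatching in
theorem exists_equiv_forall_rel_of_forth_back [Countable α] [Countable β] {R : α → β → Prop}
    (forth : ∀ a (s : Finset β), ∃ b ∉ s, R a b) (back : ∀ b (s : Finset α), ∃ a ∉ s, R a b) :
    ∃ e : α ≃ β, ∀ a, R a (e a) := by
  cases nonempty_encodable α
  cases nonempty_encodable β
  let 𝒟 := Sum.elim (definedAtLeft forth) (definedAtRight back)
  let I := Order.idealOfCofinals default 𝒟
  have hcompat : ∀ f ∈ I, ∀ g ∈ I, ∀ p ∈ f.1, ∀ q ∈ g.1, (p.1 = q.1 ↔ p.2 = q.2) := by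
    intro f hf g hg p hp q hq
    obtain ⟨m, -, hfm, hgm⟩ := I.directed _ hf _ hg
    exact m.2.2 p (hfm hp) q (hgm hq)
  have hleft (a : α) : ∃ b, ∃ f ∈ I, (a, b) ∈ f.1 := by
    obtain ⟨f, ⟨b, hb⟩, hf⟩ := Order.cofinal_meets_idealOfCofinals default 𝒟 (.inl a)
    exact ⟨b, f, hf, hb⟩
  have hright (b : β) : ∃ a, ∃ f ∈ I, (a, b) ∈ f.1 := by
    obtain ⟨f, ⟨a, ha⟩, hf⟩ := Order.cofinal_meets_idealOfCofinals default 𝒟 (.inr b)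
    exact ⟨a, f, hf, ha⟩
  choose F hF using hleft
  choose G hG using hright
  refine ⟨⟨F, G, fun a => ?_, fun b => ?_⟩, fun a => ?_⟩
  · obtain ⟨f, hf, ha⟩ := hF a
    obtain ⟨g, hg, hb⟩ := hG (F a)
    exact (hcompat g hg f hf _ hb _ ha).2 rfl
  · obtain ⟨g, hg, hb⟩ := hG b
    obtain ⟨f, hf, ha⟩ := hF (G b)
    exact (hcompat f hf g hg _ ha _ hb).1 rfl
  · obtain ⟨f, -, ha⟩ := hF a
    exact f.2.1 _ ha

end BackAndForth

section Metric

variable {X Y : Type*} [MetricSpace X] [MetricSpace Y] {D : Set X} {E : Set Y}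

theorem tendsto_infDist_compl_cofinite [CompactSpace X] (hiso : ∀ x ∈ D, IsOpen ({x} : Set X)) :
    Tendsto (fun a : D => infDist (a : X) Dᶜ) cofinite (𝓝 0) := by
  refine tendsto_order.2 ⟨fun ε hε => .of_forall fun a => hε.trans_le infDist_nonneg,
    fun ε hε => ?_⟩
  set S := {x : X | ε ≤ infDist x Dᶜ}
  have hSD : S ⊆ D := fun x hx => by
    by_contra hxD
    exact (infDist_zero_of_mem (mem_compl hxD) ▸ hx : ε ≤ 0).not_gt hε
  have hS : S.Finite := (isClosed_le continuous_const (continuous_infDist_pt _)).isCompact.finite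
    (.of_nhdsWithin fun x hx =>
      nhdsWithin_le_nhds.trans ((isOpen_singleton_iff_nhds_eq_pure x).1 (hiso x (hSD hx))).le)
  exact eventually_cofinite.2 <|
    (hS.preimage Subtype.val_injective.injOn).subset fun _ ha => le_of_not_gt ha

theorem comap_coe_nhds_le_cofinite {x : X} (hx : x ∉ D) :
    comap ((↑) : D → X) (𝓝 x) ≤ cofinite :=
  le_cofinite_iff_compl_singleton_mem.2 fun a =>
    mem_comap.2 ⟨{(a : X)}ᶜ, isOpen_compl_singleton.mem_nhds (ne_of_mem_of_not_mem a.2 hx).symm,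
      fun _ hb hba => hb (congrArg Subtype.val hba)⟩

theorem Dense.exists_notMem_finset_dist_lt (hD : Dense D) {y : X} (hy : y ∉ D) (s : Finset D)
    {r : ℝ} (hr : 0 < r) : ∃ b : D, b ∉ s ∧ dist (b : X) y < r := by
  have hU : IsOpen (ball y r ∩ ((↑) '' (s : Set D))ᶜ) :=
    isOpen_ball.inter (s.finite_toSet.image _).isClosed.isOpen_compl
  obtain ⟨z, hzD, hzr, hzs⟩ := hD.exists_mem_open hU
    ⟨y, mem_ball_self hr, fun ⟨b, _, hb⟩ => hy (hb ▸ b.2)⟩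
  exact ⟨⟨z, hzD⟩, fun h => hzs ⟨_, h, rfl⟩, hzr⟩

theorem tendsto_of_eventually_near_graph {ι : Type*} {l : Filter ι} {s : Set X} {g : s → Y}
    (hg : UniformContinuous g) {c : s} {x : ι → X} {y : ι → Y} (hx : Tendsto x l (𝓝 (c : X)))
    (hy : ∀ ε > 0, ∀ᶠ i in l, ∃ w : s, dist (x i) w < ε ∧ dist (y i) (g w) < ε) :
    Tendsto y l (𝓝 (g c)) := by
  refine Metric.tendsto_nhds.2 fun ε hε => ?_
  obtain ⟨δ, hδ, hgδ⟩ := Metric.uniformContinuous_iff.1 hg (ε / 2) (half_pos hε)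
  filter_upwards [hy (min (δ / 2) (ε / 2)) (by positivity),
    Metric.tendsto_nhds.1 hx (δ / 2) (half_pos hδ)] with i ⟨w, hxw, hyw⟩ hxc
  have hwc : dist (g w) (g c) < ε / 2 := hgδ <| by
    rw [Subtype.dist_eq]
    linarith [dist_triangle_left (w : X) c (x i), min_le_left (δ / 2) (ε / 2)]
  linarith [dist_triangle (y i) (g w) (g c), min_le_right (δ / 2) (ε / 2)]

theorem continuous_of_eventually_near_graph (hiso : ∀ x ∈ D, IsOpen ({x} : Set X))
    {g : ↥Dᶜ → Y} (hg : UniformContinuous g) {F : X → Y} (hF : ∀ x : ↥Dᶜ, F x = g x)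
    (hnear : ∀ ε > 0, ∀ᶠ a : D in cofinite, ∃ w : ↥Dᶜ, dist (a : X) w < ε ∧ dist (F a) (g w) < ε) :
    Continuous F := by
  refine continuous_iff_continuousAt.2 fun x => ?_
  by_cases hx : x ∈ D
  · rw [ContinuousAt, (isOpen_singleton_iff_nhds_eq_pure x).1 (hiso x hx)]
    exact tendsto_pure_nhds F x
  have hnear_nhds : ∀ ε > 0, ∀ᶠ y in 𝓝 x, ∃ w : ↥Dᶜ, dist y (w : X) < ε ∧ dist (F y) (g w) < ε := by
    intro ε hε
    filter_upwards [eventually_comap.1 (comap_coe_nhds_le_cofinite hx (hnear ε hε))] with y hy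
    by_cases hyD : y ∈ D
    · exact hy ⟨y, hyD⟩ rfl
    · exact ⟨⟨y, hyD⟩, by simpa using hε, by simpa [hF ⟨y, hyD⟩] using hε⟩
  rw [ContinuousAt, hF ⟨x, hx⟩]
  exact tendsto_of_eventually_near_graph (c := ⟨x, hx⟩) hg tendsto_id hnear_nhds

theorem exists_notMem_nearest_near_image (hD : IsCompact Dᶜ) (hne : Dᶜ.Nonempty)
    (hE : Dense E) (g : ↥Dᶜ → ↥Eᶜ) (a : D) (s : Finset E) :
    ∃ b ∉ s, ∃ w : ↥Dᶜ, dist (a : X) w = infDist (a : X) Dᶜ ∧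
      dist (b : Y) (g w) < infDist (a : X) Dᶜ := by
  obtain ⟨w, hw, haw⟩ := hD.exists_infDist_eq_dist hne a
  have hpos : 0 < infDist (a : X) Dᶜ := (hD.isClosed.notMem_iff_infDist_pos hne).1 (not_not.2 a.2)
  obtain ⟨b, hbs, hb⟩ := hE.exists_notMem_finset_dist_lt (g ⟨w, hw⟩).2 s hpos
  exact ⟨b, hbs, ⟨w, hw⟩, haw.symm, hb⟩

-- The tolerance involves both points so that, whichever of them is chosen first, its nearest
-- boundary point is a witness.
def IsAdmissiblePair (g : ↥Dᶜ → ↥Eᶜ) (a : X) (b : Y) : Prop :=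
  ∃ w : ↥Dᶜ, dist a w ≤ infDist a Dᶜ + infDist b Eᶜ ∧ dist b (g w) ≤ infDist a Dᶜ + infDist b Eᶜ

theorem exists_equiv_isAdmissiblePair [Countable D] [Countable E] (hD : Dense D) (hE : Dense E)
    (hDc : IsCompact Dᶜ) (hEc : IsCompact Eᶜ) (hDne : Dᶜ.Nonempty) (hEne : Eᶜ.Nonempty)
    (g : ↥Dᶜ ≃ ↥Eᶜ) : ∃ e : D ≃ E, ∀ a : D, IsAdmissiblePair g a (e a) := by
  refine exists_equiv_forall_rel_of_forth_back (R := fun (a : D) (b : E) => IsAdmissiblePair g a b)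
    (fun a s => ?_) (fun b s => ?_)
  · obtain ⟨b, hbs, w, haw, hbw⟩ := exists_notMem_nearest_near_image hDc hDne hE g a s
    have := infDist_nonneg (x := (b : Y)) (s := Eᶜ)
    exact ⟨b, hbs, w, by linarith, by linarith⟩
  · obtain ⟨a, has, w, hbw, haw⟩ := exists_notMem_nearest_near_image hEc hEne hD g.symm b s
    have := infDist_nonneg (x := (a : X)) (s := Dᶜ)
    exact ⟨a, has, g.symm w, by linarith, by rw [g.apply_symm_apply]; linarith⟩

end Metric

namespace Equiv.Set

variable {α β : Type*} {s : Set α} {t : Set β} [DecidablePred (· ∈ s)] [DecidablePred (· ∈ t)]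

def piecewiseCompl (e : s ≃ t) (f : ↥sᶜ ≃ ↥tᶜ) : α ≃ β :=
  (Equiv.Set.sumCompl s).symm.trans ((e.sumCongr f).trans (Equiv.Set.sumCompl t))

@[simp]
theorem piecewiseCompl_apply_coe (e : s ≃ t) (f : ↥sᶜ ≃ ↥tᶜ) (a : s) :
    piecewiseCompl e f a = e a := by
  simp [piecewiseCompl]

@[simp]
theorem piecewiseCompl_apply_coe_compl (e : s ≃ t) (f : ↥sᶜ ≃ ↥tᶜ) (a : ↥sᶜ) :
    piecewiseCompl e f a = f a := by
  simp [piecewiseCompl]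

theorem piecewiseCompl_image (e : s ≃ t) (f : ↥sᶜ ≃ ↥tᶜ) : piecewiseCompl e f '' s = t := by
  ext y
  constructor
  · rintro ⟨x, hx, rfl⟩
    exact piecewiseCompl_apply_coe e f ⟨x, hx⟩ ▸ (e ⟨x, hx⟩).2
  · intro hy
    exact ⟨e.symm ⟨y, hy⟩, (e.symm _).2, by simp⟩

end Equiv.Set

theorem stmt_8_general {X₁ X₂ : Type*} [MetricSpace X₁] [CompactSpace X₁]
    [MetricSpace X₂] [CompactSpace X₂]
    (D₁ : Set X₁) (D₂ : Set X₂)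
    (hc₁ : D₁.Countable) (hc₂ : D₂.Countable)
    (hd₁ : Dense D₁) (hd₂ : Dense D₂)
    (hiso₁ : ∀ x ∈ D₁, IsOpen ({x} : Set X₁))
    (hiso₂ : ∀ x ∈ D₂, IsOpen ({x} : Set X₂))
    (hcl₁ : IsClosed D₁ᶜ) (hcl₂ : IsClosed D₂ᶜ)
    (hne₁ : D₁ᶜ.Nonempty) (hne₂ : D₂ᶜ.Nonempty)
    (bf : (D₁ᶜ : Set X₁) ≃ₜ (D₂ᶜ : Set X₂)) :
    ∃ F : X₁ ≃ₜ X₂, F '' D₁ = D₂ ∧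
      ∀ x : (D₁ᶜ : Set X₁), F (x : X₁) = (bf x : X₂) := by
  classical
  have := hc₁.to_subtype
  have := hc₂.to_subtype
  have := isCompact_iff_compactSpace.1 hcl₁.isCompact
  obtain ⟨e, he⟩ :=
    exists_equiv_isAdmissiblePair hd₁ hd₂ hcl₁.isCompact hcl₂.isCompact hne₁ hne₂ bf.toEquiv
  let F := Equiv.Set.piecewiseCompl e bf.toEquiv
  have hτ : Tendsto (fun a : D₁ => infDist (a : X₁) D₁ᶜ + infDist (e a : X₂) D₂ᶜ)
      cofinite (𝓝 0) := by
    simpa using (tendsto_infDist_compl_cofinite hiso₁).add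
      ((tendsto_infDist_compl_cofinite hiso₂).comp e.injective.tendsto_cofinite)
  have hF : Continuous F := by
    refine continuous_of_eventually_near_graph hiso₁
      (CompactSpace.uniformContinuous_of_continuous (continuous_subtype_val.comp bf.continuous))
      (Equiv.Set.piecewiseCompl_apply_coe_compl e bf.toEquiv) fun ε hε => ?_
    filter_upwards [(tendsto_order.1 hτ).2 ε hε] with a ha
    obtain ⟨w, haw, hbw⟩ := he a
    exact ⟨w, haw.trans_lt ha, by simpa [F] using hbw.trans_lt ha⟩
  exact ⟨hF.homeoOfEquivCompactToT2, Equiv.Set.piecewiseCompl_image e bf.toEquiv,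
    Equiv.Set.piecewiseCompl_apply_coe_compl e bf.toEquiv⟩

theorem stmt_8 {X₁ X₂ : Type*} [MetricSpace X₁] [CompactSpace X₁]
    [MetricSpace X₂] [CompactSpace X₂]
    (D₁ : Set X₁) (D₂ : Set X₂)
    (hc₁ : D₁.Countable) (hc₂ : D₂.Countable)
    (hi₁ : D₁.Infinite) (hi₂ : D₂.Infinite)
    (hd₁ : Dense D₁) (hd₂ : Dense D₂)
    (hiso₁ : ∀ x ∈ D₁, IsOpen ({x} : Set X₁))
    (hiso₂ : ∀ x ∈ D₂, IsOpen ({x} : Set X₂))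
    (hcl₁ : IsClosed D₁ᶜ) (hcl₂ : IsClosed D₂ᶜ)
    (hne₁ : D₁ᶜ.Nonempty) (hne₂ : D₂ᶜ.Nonempty)
    (bf : (D₁ᶜ : Set X₁) ≃ₜ (D₂ᶜ : Set X₂))
    (π₁ : X₁ → X₁) (π₂ : X₂ → X₂)
    (hπ₁ : ∀ x ∈ D₁, π₁ x ∈ D₁ᶜ ∧ dist x (π₁ x) = Metric.infDist x D₁ᶜ)
    (hπ₂ : ∀ x ∈ D₂, π₂ x ∈ D₂ᶜ ∧ dist x (π₂ x) = Metric.infDist x D₂ᶜ) :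
    ∃ F : X₁ ≃ₜ X₂, F '' D₁ = D₂ ∧
      ∀ x : (D₁ᶜ : Set X₁), F (x : X₁) = (bf x : X₂) :=
  stmt_8_general D₁ D₂ hc₁ hc₂ hd₁ hd₂ hiso₁ hiso₂ hcl₁ hcl₂ hne₁ hne₂ bf
end

section
/- Let T₁ and T₂ be the Bass–Serre trees of free products G₁ = A₁ ∗ B₁ and G₂ = A₂ ∗ B₂, with base edges τᵢ = [vᵢ, uᵢ] stabilized by (Aᵢ, Bᵢ). Given bijections f₁ : A₁ → A₂ and f₂ : B₁ → B₂ with fᵢ(1) = 1, the map ι : T₁ → T₂ sending the edge a₁b₁⋯aₙbₙ·τ₁ to f₁(a₁)f₂(b₁)⋯f₁(aₙ)f₂(bₙ)·τ₂ (using reduced forms) is a well-defined graph isomorphism with ι(τ₁) = τ₂. -/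
open Monoid

/-- The product in `A ∗ B` of a word written as a list of letters from `A ⊕ B`. -/
def letterProd {A B : Type*} [Group A] [Group B] (w : List (A ⊕ B)) :
    Monoid.Coprod A B :=
  (w.map (Sum.elim (Coprod.inl : A →* Monoid.Coprod A B)
    (Coprod.inr : B →* Monoid.Coprod A B))).prod

/-- A word is reduced if it is nonempty, its letters alternate between the two
factors, and no letter is the identity. -/
def IsReducedWord {A B : Type*} [Group A] [Group B] (w : List (A ⊕ B)) : Prop :=
  w ≠ [] ∧ w.Chain' (fun x y => x.isLeft ≠ y.isLeft) ∧
    ∀ x ∈ w, x ≠ Sum.inl (1 : A) ∧ x ≠ Sum.inr (1 : B)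

namespace BSAux

universe u v

variable {A : Type u} {B : Type v} [Group A] [Group B]
set_option linter.unusedSectionVars false

def Fac (A : Type u) (B : Type v) : Bool → Type (max u v) :=
  fun b => cond b (ULift.{u} B) (ULift.{v} A)

instance (A : Type u) (B : Type v) [Group A] [Group B] : ∀ b, Group (Fac A B b) := fun b => by
  cases b <;> (dsimp [Fac]; infer_instance)

noncomputable instance (A : Type u) (B : Type v) : ∀ b, DecidableEq (Fac A B b) := fun _ => Classical.decEq _

def inA (A : Type u) (B : Type v) [Group A] [Group B] : A →* Fac A B false :=
  (MulEquiv.ulift.symm : A ≃* ULift A).toMonoidHom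

def inB (A : Type u) (B : Type v) [Group A] [Group B] : B →* Fac A B true :=
  (MulEquiv.ulift.symm : B ≃* ULift B).toMonoidHom

def outF (A : Type u) (B : Type v) [Group A] [Group B] :
    ∀ b, Fac A B b →* Coprod A B := fun b => by
  cases b
  · exact Coprod.inl.comp (MulEquiv.ulift : ULift A ≃* A).toMonoidHom
  · exact Coprod.inr.comp (MulEquiv.ulift : ULift B ≃* B).toMonoidHom

def toCoprodI : Coprod A B →* CoprodI (Fac A B) :=
  Coprod.lift ((CoprodI.of (i := false)).comp (inA A B))
    ((CoprodI.of (i := true)).comp (inB A B))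

def ofCoprodI : CoprodI (Fac A B) →* Coprod A B :=
  CoprodI.lift (outF A B)

@[simp] lemma toCoprodI_inl (a : A) :
    (toCoprodI (Coprod.inl a) : CoprodI (Fac A B)) = CoprodI.of (inA A B a) := by
  simp [toCoprodI]

@[simp] lemma toCoprodI_inr (b : B) :
    (toCoprodI (Coprod.inr b) : CoprodI (Fac A B)) = CoprodI.of (inB A B b) := by
  simp [toCoprodI]

@[simp] lemma ofCoprodI_ofA (m : Fac A B false) :
    ofCoprodI (CoprodI.of m) = Coprod.inl m.down := by
  simp [ofCoprodI, CoprodI.lift_of, outF]; rfl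

@[simp] lemma ofCoprodI_ofB (m : Fac A B true) :
    ofCoprodI (CoprodI.of m) = Coprod.inr m.down := by
  simp [ofCoprodI, CoprodI.lift_of, outF]; rfl

def e (A : Type u) (B : Type v) [Group A] [Group B] : Coprod A B ≃* CoprodI (Fac A B) where
  toFun := toCoprodI
  invFun := ofCoprodI
  left_inv x := by
    have : (ofCoprodI.comp (toCoprodI : Coprod A B →* _)) = MonoidHom.id _ := by
      apply Coprod.hom_ext <;> ext x <;> simp [inA, inB] <;> rfl
    exact DFunLike.congr_fun this x
  right_inv x := by
    have : (toCoprodI.comp (ofCoprodI : CoprodI (Fac A B) →* _)) = MonoidHom.id _ := by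
      apply CoprodI.ext_hom
      rintro (_ | _) <;> ext m <;> simp [inA, inB] <;> rfl
    exact DFunLike.congr_fun this x
  map_mul' := map_mul _

lemma toCoprodI_injective :
    Function.Injective (toCoprodI : Coprod A B →* CoprodI (Fac A B)) :=
  (e A B).injective

def toSig : A ⊕ B → (Σ b, Fac A B b) :=
  Sum.elim (fun a => ⟨false, ULift.up a⟩) (fun b => ⟨true, ULift.up b⟩)

def fromSig : (Σ b, Fac A B b) → A ⊕ B
  | ⟨false, a⟩ => .inl a.down
  | ⟨true, b⟩ => .inr b.down

@[simp] lemma toSig_fromSig (x : Σ b, Fac A B b) : toSig (fromSig x) = x := by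
  rcases x with ⟨(_ | _), m⟩ <;> rfl

@[simp] lemma fromSig_toSig (x : A ⊕ B) : fromSig (toSig x) = x := by
  rcases x with a | b <;> rfl

/-- Reduced (but possibly empty) words. -/
def Ok (w : List (A ⊕ B)) : Prop :=
  w.Chain' (fun x y => x.isLeft ≠ y.isLeft) ∧
    ∀ x ∈ w, x ≠ Sum.inl (1 : A) ∧ x ≠ Sum.inr (1 : B)

lemma toSig_fst_ne {x y : A ⊕ B} (h : x.isLeft ≠ y.isLeft) :
    (toSig x).1 ≠ (toSig y).1 := by
  rcases x with a | b <;> rcases y with a' | b' <;> simp_all [toSig]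

lemma fromSig_isLeft_ne {x y : Σ b, Fac A B b} (h : x.1 ≠ y.1) :
    (fromSig x).isLeft ≠ (fromSig y).isLeft := by
  rcases x with ⟨(_ | _), m⟩ <;> rcases y with ⟨(_ | _), m'⟩ <;> simp_all [fromSig]

def mkWord (u : List (A ⊕ B)) (hu : Ok u) : CoprodI.Word (Fac A B) where
  toList := u.map toSig
  ne_one := by
    rintro l hl
    rw [List.mem_map] at hl
    obtain ⟨x, hx, rfl⟩ := hl
    obtain ⟨hx1, hx2⟩ := hu.2 x hx
    rcases x with a | b
    · intro h
      apply hx1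
      have : (ULift.up a : ULift.{v} A) = 1 := h
      have := congrArg ULift.down this
      simp at this
      simp [this]
    · intro h
      apply hx2
      have : (ULift.up b : ULift.{u} B) = 1 := h
      have := congrArg ULift.down this
      simp at this
      simp [this]
  chain_ne := by
    rw [List.isChain_map]
    exact List.IsChain.imp (fun a b h => toSig_fst_ne h) hu.1

lemma prod_mkWord (u : List (A ⊕ B)) (hu : Ok u) :
    (mkWord u hu).prod = toCoprodI (letterProd u) := by
  rw [CoprodI.Word.prod, letterProd, map_list_prod, mkWord]
  simp only [List.map_map]
  congr 1
  apply List.map_congr_left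
  rintro (a | b) _ <;> simp [toSig, Function.comp] <;> rfl

lemma equiv_eq_mkWord (u : List (A ⊕ B)) (hu : Ok u) :
    CoprodI.Word.equiv (toCoprodI (letterProd u)) = mkWord u hu := by
  rw [← prod_mkWord u hu]
  exact (Equiv.apply_eq_iff_eq_symm_apply _).2 rfl

lemma letterProd_injOn {u v : List (A ⊕ B)} (hu : Ok u) (hv : Ok v)
    (h : letterProd u = letterProd v) : u = v := by
  have := (equiv_eq_mkWord u hu).symm.trans (h ▸ equiv_eq_mkWord v hv)
  have hl : u.map toSig = v.map (toSig (A := A) (B := B)) :=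
    congrArg CoprodI.Word.toList this
  have := congrArg (List.map fromSig) hl
  simpa [List.map_map, Function.comp_def] using this

/-- The reduced word of an element. -/
noncomputable def red (g : Coprod A B) : List (A ⊕ B) :=
  (CoprodI.Word.equiv (toCoprodI g)).toList.map fromSig

lemma ok_red (g : Coprod A B) : Ok (red g) := by
  constructor
  · rw [red, List.Chain', List.isChain_map]
    exact List.IsChain.imp (fun a b h => fromSig_isLeft_ne h) (CoprodI.Word.equiv (toCoprodI g)).chain_ne
  · rintro x hx
    rw [red, List.mem_map] at hx
    obtain ⟨l, hl, rfl⟩ := hx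
    have h1 := (CoprodI.Word.equiv (toCoprodI g)).ne_one l hl
    rcases l with ⟨(_ | _), m⟩ <;>
      constructor <;> simp [fromSig] <;> intro h <;> apply h1 <;>
        (apply ULift.ext; exact h)

lemma letterProd_red (g : Coprod A B) : letterProd (red g) = g := by
  apply toCoprodI_injective
  have hok := ok_red g
  rw [← prod_mkWord _ hok]
  have : (mkWord (red g) hok).toList = (CoprodI.Word.equiv (toCoprodI g)).toList := by
    simp [mkWord, red, List.map_map, Function.comp_def]
  have hw : mkWord (red g) hok = CoprodI.Word.equiv (toCoprodI g) := CoprodI.Word.ext this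
  rw [hw]
  exact (CoprodI.Word.equiv).symm_apply_apply (toCoprodI g)

lemma red_letterProd {u : List (A ⊕ B)} (hu : Ok u) : red (letterProd u) = u :=
  letterProd_injOn (ok_red _) hu (letterProd_red _)



/-! ### Combinatorics of reduced words -/

def letter : A ⊕ B → Coprod A B := Sum.elim (⇑(Coprod.inl : A →* Coprod A B)) (⇑(Coprod.inr : B →* Coprod A B))

@[simp] lemma letterProd_nil : letterProd ([] : List (A ⊕ B)) = 1 := rfl

@[simp] lemma letterProd_concat (u : List (A ⊕ B)) (x : A ⊕ B) :
    letterProd (u ++ [x]) = letterProd u * letter x := by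
  simp [letterProd, letter]

def dropA (l : List (A ⊕ B)) : List (A ⊕ B) :=
  match l.getLast? with
  | some (Sum.inl _) => l.dropLast
  | _ => l

@[simp] lemma dropA_nil : dropA ([] : List (A ⊕ B)) = [] := rfl

@[simp] lemma dropA_concat_inl (u : List (A ⊕ B)) (a : A) :
    dropA (u ++ [Sum.inl a]) = u := by
  unfold dropA
  rw [List.getLast?_concat]
  exact List.dropLast_concat

@[simp] lemma dropA_concat_inr (u : List (A ⊕ B)) (b : B) :
    dropA (u ++ [Sum.inr b]) = u ++ [Sum.inr b] := by
  unfold dropA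
  rw [List.getLast?_concat]

/-- Every word is its `dropA` times an `inl` letter (possibly trivial). -/
lemma exists_dropA_factor (l : List (A ⊕ B)) :
    ∃ a : A, letterProd l = letterProd (dropA l) * Coprod.inl a := by
  rcases l.eq_nil_or_concat' with rfl | ⟨s, x, rfl⟩
  · exact ⟨1, by simp⟩
  · rcases x with a | b
    · exact ⟨a, by simp [letter]⟩
    · exact ⟨1, by simp⟩

lemma ok_of_concat {s : List (A ⊕ B)} {x : A ⊕ B} (h : Ok (s ++ [x])) : Ok s :=
  ⟨(List.isChain_append.1 h.1).1, fun y hy => h.2 y (by simp [hy])⟩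

lemma dropA_eq_self_of_ok_concat_inl {s : List (A ⊕ B)} {a : A}
    (h : Ok (s ++ [Sum.inl a])) : dropA s = s := by
  rcases s.eq_nil_or_concat' with rfl | ⟨t, y, rfl⟩
  · rfl
  · have := (List.isChain_append.1 h.1).2.2 y (by rw [List.getLast?_concat]; rfl)
      (Sum.inl a) rfl
    rcases y with a' | b'
    · simp at this
    · simp

lemma mul_inl (u : List (A ⊕ B)) (hu : Ok u) (a : A) :
    ∃ w, Ok w ∧ letterProd w = letterProd u * Coprod.inl a ∧ dropA w = dropA u := by
  rcases eq_or_ne a 1 with rfl | ha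
  · exact ⟨u, hu, by simp, rfl⟩
  rcases u.eq_nil_or_concat' with rfl | ⟨s, x, rfl⟩
  · refine ⟨[Sum.inl a], ⟨List.isChain_singleton _, ?_⟩, by simp [letterProd], by
      simpa using (dropA_concat_inl ([] : List (A ⊕ B)) a)⟩
    rintro x hx
    simp at hx
    subst hx
    simp [ha]
  rcases x with a' | b'
  · rcases eq_or_ne (a' * a) 1 with hc | hc
    · refine ⟨s, ok_of_concat hu, ?_, ?_⟩
      · simp [letter, mul_assoc, ← map_mul, hc]
      · rw [dropA_concat_inl, dropA_eq_self_of_ok_concat_inl hu]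
    · refine ⟨s ++ [Sum.inl (a' * a)], ?_, ?_, by simp⟩
      · constructor
        · rw [List.Chain', List.isChain_append]
          refine ⟨(List.isChain_append.1 hu.1).1, List.isChain_singleton _, ?_⟩
          intro y hy z hz
          simp only [List.head?_cons, Option.mem_some_iff] at hz
          subst hz
          have := (List.isChain_append.1 hu.1).2.2 y hy (Sum.inl a') rfl
          simpa using this
        · intro y hy
          rcases List.mem_append.1 hy with hy | hy
          · exact hu.2 y (by simp [hy])
          · simp only [List.mem_singleton] at hy
            subst hy
            simp [hc]
      · simp [letter, mul_assoc, ← map_mul]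
  · refine ⟨(s ++ [Sum.inr b']) ++ [Sum.inl a], ?_, by simp [letterProd, mul_assoc], by
      rw [dropA_concat_inl, dropA_concat_inr]⟩
    constructor
    · rw [List.Chain', List.isChain_append]
      refine ⟨hu.1, List.isChain_singleton _, ?_⟩
      intro y hy z hz
      simp only [List.head?_cons, Option.mem_some_iff] at hz
      subst hz
      rw [List.getLast?_concat] at hy
      simp only [Option.mem_some_iff] at hy
      subst hy
      simp
    · intro y hy
      rcases List.mem_append.1 hy with hy | hy
      · exact hu.2 y hy
      · simp only [List.mem_singleton] at hy
        subst hy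
        simp [ha]

lemma inl_mem_iff {u v : List (A ⊕ B)} (hu : Ok u) (hv : Ok v) :
    (letterProd u)⁻¹ * letterProd v ∈
        Set.range (⇑(Coprod.inl : A →* Coprod A B)) ↔ dropA u = dropA v := by
  constructor
  · rintro ⟨a, ha⟩
    have hv' : letterProd v = letterProd u * Coprod.inl a := by
      rw [ha]; group
    obtain ⟨w, hw, hwp, hwd⟩ := mul_inl u hu a
    have : v = w := letterProd_injOn hv hw (hv'.trans hwp.symm)
    rw [this, hwd]
  · intro h
    obtain ⟨a, hau⟩ := exists_dropA_factor u
    obtain ⟨b, hbv⟩ := exists_dropA_factor v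
    refine ⟨a⁻¹ * b, ?_⟩
    rw [hau, hbv, ← h]
    simp [mul_assoc]


def dropB (l : List (A ⊕ B)) : List (A ⊕ B) :=
  match l.getLast? with
  | some (Sum.inr _) => l.dropLast
  | _ => l

@[simp] lemma dropB_nil : dropB ([] : List (A ⊕ B)) = [] := rfl

@[simp] lemma dropB_concat_inr (u : List (A ⊕ B)) (b : B) :
    dropB (u ++ [Sum.inr b]) = u := by
  unfold dropB
  rw [List.getLast?_concat]
  exact List.dropLast_concat

@[simp] lemma dropB_concat_inl (u : List (A ⊕ B)) (a : A) :
    dropB (u ++ [Sum.inl a]) = u ++ [Sum.inl a] := by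
  unfold dropB
  rw [List.getLast?_concat]

lemma exists_dropB_factor (l : List (A ⊕ B)) :
    ∃ b : B, letterProd l = letterProd (dropB l) * Coprod.inr b := by
  rcases l.eq_nil_or_concat' with rfl | ⟨s, x, rfl⟩
  · exact ⟨1, by simp⟩
  · rcases x with a | b
    · exact ⟨1, by simp⟩
    · exact ⟨b, by simp [letter]⟩

lemma dropB_eq_self_of_ok_concat_inr {s : List (A ⊕ B)} {b : B}
    (h : Ok (s ++ [Sum.inr b])) : dropB s = s := by
  rcases s.eq_nil_or_concat' with rfl | ⟨t, y, rfl⟩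
  · rfl
  · have := (List.isChain_append.1 h.1).2.2 y (by rw [List.getLast?_concat]; rfl)
      (Sum.inr b) rfl
    rcases y with a' | b'
    · simp
    · simp at this

lemma mul_inr (u : List (A ⊕ B)) (hu : Ok u) (b : B) :
    ∃ w, Ok w ∧ letterProd w = letterProd u * Coprod.inr b ∧ dropB w = dropB u := by
  rcases eq_or_ne b 1 with rfl | hb
  · exact ⟨u, hu, by simp, rfl⟩
  rcases u.eq_nil_or_concat' with rfl | ⟨s, x, rfl⟩
  · refine ⟨[Sum.inr b], ⟨List.isChain_singleton _, ?_⟩, by simp [letterProd], by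
      simpa using (dropB_concat_inr ([] : List (A ⊕ B)) b)⟩
    rintro x hx
    simp at hx
    subst hx
    simp [hb]
  rcases x with a' | b'
  · refine ⟨(s ++ [Sum.inl a']) ++ [Sum.inr b], ?_, by simp [letterProd, mul_assoc], by
      rw [dropB_concat_inr, dropB_concat_inl]⟩
    constructor
    · rw [List.Chain', List.isChain_append]
      refine ⟨hu.1, List.isChain_singleton _, ?_⟩
      intro y hy z hz
      simp only [List.head?_cons, Option.mem_some_iff] at hz
      subst hz
      rw [List.getLast?_concat] at hy
      simp only [Option.mem_some_iff] at hy
      subst hy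
      simp
    · intro y hy
      rcases List.mem_append.1 hy with hy | hy
      · exact hu.2 y hy
      · simp only [List.mem_singleton] at hy
        subst hy
        simp [hb]
  · rcases eq_or_ne (b' * b) 1 with hc | hc
    · refine ⟨s, ok_of_concat hu, ?_, ?_⟩
      · simp [letter, mul_assoc, ← map_mul, hc]
      · rw [dropB_concat_inr, dropB_eq_self_of_ok_concat_inr hu]
    · refine ⟨s ++ [Sum.inr (b' * b)], ?_, ?_, by simp⟩
      · constructor
        · rw [List.Chain', List.isChain_append]
          refine ⟨(List.isChain_append.1 hu.1).1, List.isChain_singleton _, ?_⟩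
          intro y hy z hz
          simp only [List.head?_cons, Option.mem_some_iff] at hz
          subst hz
          have := (List.isChain_append.1 hu.1).2.2 y hy (Sum.inr b') rfl
          simpa using this
        · intro y hy
          rcases List.mem_append.1 hy with hy | hy
          · exact hu.2 y (by simp [hy])
          · simp only [List.mem_singleton] at hy
            subst hy
            simp [hc]
      · simp [letter, mul_assoc, ← map_mul]

lemma inr_mem_iff {u v : List (A ⊕ B)} (hu : Ok u) (hv : Ok v) :
    (letterProd u)⁻¹ * letterProd v ∈
        Set.range (⇑(Coprod.inr : B →* Coprod A B)) ↔ dropB u = dropB v := by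
  constructor
  · rintro ⟨b, hb⟩
    have hv' : letterProd v = letterProd u * Coprod.inr b := by
      rw [hb]; group
    obtain ⟨w, hw, hwp, hwd⟩ := mul_inr u hu b
    have : v = w := letterProd_injOn hv hw (hv'.trans hwp.symm)
    rw [this, hwd]
  · intro h
    obtain ⟨b, hbu⟩ := exists_dropB_factor u
    obtain ⟨c, hcv⟩ := exists_dropB_factor v
    refine ⟨b⁻¹ * c, ?_⟩
    rw [hbu, hcv, ← h]
    simp [mul_assoc]

section Map

variable {A₂ : Type*} {B₂ : Type*} [Group A₂] [Group B₂]
variable (f₁ : A ≃ A₂) (f₂ : B ≃ B₂)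

lemma ok_map (h₁ : f₁ 1 = 1) (h₂ : f₂ 1 = 1) {u : List (A ⊕ B)} (hu : Ok u) :
    Ok (u.map (Sum.map f₁ f₂)) := by
  constructor
  · rw [List.Chain', List.isChain_map]
    refine List.IsChain.imp ?_ hu.1
    rintro (a | b) (a' | b') h <;> simp_all
  · rintro x hx
    rw [List.mem_map] at hx
    obtain ⟨y, hy, rfl⟩ := hx
    obtain ⟨hy1, hy2⟩ := hu.2 y hy
    rcases y with a | b
    · refine ⟨?_, by simp⟩
      simp only [Sum.map_inl, ne_eq, Sum.inl.injEq]
      intro h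
      exact hy1 (by rw [show a = 1 from f₁.injective (h.trans h₁.symm)])
    · refine ⟨by simp, ?_⟩
      simp only [Sum.map_inr, ne_eq, Sum.inr.injEq]
      intro h
      exact hy2 (by rw [show b = 1 from f₂.injective (h.trans h₂.symm)])

lemma map_symm_map (u : List (A ⊕ B)) :
    (u.map (Sum.map f₁ f₂)).map (Sum.map f₁.symm f₂.symm) = u := by
  rw [List.map_map]
  have : (Sum.map ⇑f₁.symm ⇑f₂.symm ∘ Sum.map ⇑f₁ ⇑f₂) = id := by
    funext x
    rcases x with a | b <;> simp
  rw [this, List.map_id]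

lemma dropA_map (u : List (A ⊕ B)) :
    dropA (u.map (Sum.map f₁ f₂)) = (dropA u).map (Sum.map f₁ f₂) := by
  rcases u.eq_nil_or_concat' with rfl | ⟨s, x, rfl⟩
  · simp
  · rcases x with a | b <;> simp

lemma dropB_map (u : List (A ⊕ B)) :
    dropB (u.map (Sum.map f₁ f₂)) = (dropB u).map (Sum.map f₁ f₂) := by
  rcases u.eq_nil_or_concat' with rfl | ⟨s, x, rfl⟩
  · simp
  · rcases x with a | b <;> simp

end Map

end BSAux

open BSAux

/-- The map between Bass–Serre trees of two free products induced by bijections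
of the factors fixing the identity: edges of the Bass–Serre tree of `A ∗ B`
correspond to elements of `A ∗ B` (translates of the base edge `τ`), the edge
map sends (the edge labelled by) the reduced word `a₁b₁⋯aₙbₙ` to
`f₁(a₁)f₂(b₁)⋯f₁(aₙ)f₂(bₙ)`, it sends the base edge to the base edge, and two
edges share a vertex (of type `A`, resp. `B`) iff their images do. -/
theorem stmt_14 {A₁ B₁ A₂ B₂ : Type*} [Group A₁] [Group B₁] [Group A₂] [Group B₂]
    (f₁ : A₁ ≃ A₂) (f₂ : B₁ ≃ B₂) (h₁ : f₁ 1 = 1) (h₂ : f₂ 1 = 1) :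
    ∃ ι : Monoid.Coprod A₁ B₁ ≃ Monoid.Coprod A₂ B₂,
      ι 1 = 1 ∧
      (∀ w : List (A₁ ⊕ B₁), IsReducedWord w →
        ι (letterProd w) = letterProd (w.map (Sum.map f₁ f₂))) ∧
      (∀ g g' : Monoid.Coprod A₁ B₁,
        (g⁻¹ * g' ∈ Set.range (Coprod.inl : A₁ →* Monoid.Coprod A₁ B₁) ↔
          (ι g)⁻¹ * ι g' ∈ Set.range (Coprod.inl : A₂ →* Monoid.Coprod A₂ B₂)) ∧
        (g⁻¹ * g' ∈ Set.range (Coprod.inr : B₁ →* Monoid.Coprod A₁ B₁) ↔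
          (ι g)⁻¹ * ι g' ∈ Set.range (Coprod.inr : B₂ →* Monoid.Coprod A₂ B₂))) := by
  have h₁' : f₁.symm 1 = 1 := by rw [← h₁, Equiv.symm_apply_apply]
  have h₂' : f₂.symm 1 = 1 := by rw [← h₂, Equiv.symm_apply_apply]
  have okN : Ok ([] : List (A₁ ⊕ B₁)) := ⟨List.isChain_nil, by simp⟩
  have hred1 : red (1 : Coprod A₁ B₁) = [] := by
    simpa using red_letterProd okN
  refine ⟨{ toFun := fun g => letterProd ((red g).map (Sum.map f₁ f₂)),
            invFun := fun g => letterProd ((red g).map (Sum.map f₁.symm f₂.symm)),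
            left_inv := ?_, right_inv := ?_ }, ?_, ?_, ?_⟩
  · intro g
    simp only
    rw [red_letterProd (ok_map f₁ f₂ h₁ h₂ (ok_red g)), map_symm_map, letterProd_red]
  · intro g
    simp only
    have hm := map_symm_map f₁.symm f₂.symm (red g)
    simp only [Equiv.symm_symm] at hm
    rw [red_letterProd (ok_map f₁.symm f₂.symm h₁' h₂' (ok_red g)), hm, letterProd_red]
  · simp only [Equiv.coe_fn_mk, hred1, List.map_nil, letterProd_nil]
  · intro w hw
    simp only [Equiv.coe_fn_mk]
    rw [red_letterProd ⟨hw.2.1, hw.2.2⟩]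
  · intro g g'
    simp only [Equiv.coe_fn_mk]
    constructor
    · conv_lhs => rw [← letterProd_red g, ← letterProd_red g']
      rw [inl_mem_iff (ok_red g) (ok_red g'),
        inl_mem_iff (ok_map f₁ f₂ h₁ h₂ (ok_red g)) (ok_map f₁ f₂ h₁ h₂ (ok_red g')),
        dropA_map, dropA_map]
      constructor
      · intro h; rw [h]
      · intro h
        have := congrArg (List.map (Sum.map f₁.symm f₂.symm)) h
        rwa [map_symm_map, map_symm_map] at this
    · conv_lhs => rw [← letterProd_red g, ← letterProd_red g']
      rw [inr_mem_iff (ok_red g) (ok_red g'),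
        inr_mem_iff (ok_map f₁ f₂ h₁ h₂ (ok_red g)) (ok_map f₁ f₂ h₁ h₂ (ok_red g')),
        dropB_map, dropB_map]
      constructor
      · intro h; rw [h]
      · intro h
        have := congrArg (List.map (Sum.map f₁.symm f₂.symm)) h
        rwa [map_symm_map, map_symm_map] at this
end
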